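/- arXiv:1908.04147 — 6 statements merged into one kernel-verified Lean document; each statement's English description precedes it below -/
import Mathlib

section
/- Let T_d(x,k) = Σ_{0≤γ_1<...<γ_d<k} Π_i (x+γ_i) and T̃_d(x,k) = Σ_{1≤γ_1≤...≤γ_d≤k} Π_i (−x+γ_i). Viewing T_d(x,k) as a polynomial in k (which exists by polynomiality of T_d), we have T̃_d(x,k) = T_d(x,−k) for all positive integers k. -/
/-- `T d x k = ∑_{0 ≤ γ₁ < ... < γ_d < k} ∏ (x+γ_i)`, over strictly increasing
`d`-tuples in `{0,…,k−1}`, encoded as `d`-element subsets of `Finset.range k`. -/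
noncomputable def Tsum (d : ℕ) (x : ℝ) (k : ℕ) : ℝ :=
  ∑ s ∈ Finset.powersetCard d (Finset.range k), ∏ γ ∈ s, (x + (γ : ℝ))

/-- `T̃ d x k = ∑_{1 ≤ γ₁ ≤ ... ≤ γ_d ≤ k} ∏ (−x+γ_i)`, over weakly increasing
`d`-tuples in `{1,…,k}`, encoded as monotone functions `Fin d → Fin k`
(the value `γ i + 1` ranging over `{1,…,k}`). -/
noncomputable def Ttilde (d : ℕ) (x : ℝ) (k : ℕ) : ℝ :=
  ∑ γ ∈ Finset.univ.filter (fun γ : Fin d → Fin k => Monotone γ),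
    ∏ i : Fin d, (-x + ((γ i : ℕ) + 1 : ℝ))

open Polynomial Finset

/-- sum of j^n over j < k is a polynomial in k -/
lemma pow_antideriv (n : ℕ) : ∃ p : Polynomial ℝ, ∀ k : ℕ,
    p.eval (k : ℝ) = ∑ j ∈ range k, (j : ℝ) ^ n := by
  refine ⟨∑ i ∈ range (n + 1),
    C (((_root_.bernoulli i * ((n + 1).choose i) / (n + 1) : ℚ) : ℝ)) * X ^ (n + 1 - i), fun k => ?_⟩
  have h := sum_range_pow k n
  have h2 : ((∑ j ∈ range k, (j : ℚ) ^ n : ℚ) : ℝ) = ∑ j ∈ range k, (j : ℝ) ^ n := by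
    push_cast; ring
  rw [← h2, h]
  push_cast
  simp [eval_finset_sum]
  ring_nf
  congr 1
  ext i
  ring

lemma poly_antideriv (q : Polynomial ℝ) : ∃ p : Polynomial ℝ, ∀ k : ℕ,
    p.eval (k : ℝ) = ∑ j ∈ range k, q.eval (j : ℝ) := by
  induction q using Polynomial.induction_on' with
  | add f g hf hg =>
    obtain ⟨pf, hpf⟩ := hf
    obtain ⟨pg, hpg⟩ := hg
    exact ⟨pf + pg, fun k => by simp [hpf, hpg, Finset.sum_add_distrib]⟩
  | monomial n a =>
    obtain ⟨p, hp⟩ := pow_antideriv n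
    exact ⟨C a * p, fun k => by simp [hp, Finset.mul_sum]⟩

lemma Tsum_zero (x : ℝ) (k : ℕ) : Tsum 0 x k = 1 := by
  simp [Tsum]

lemma Tsum_succ_zero (d : ℕ) (x : ℝ) : Tsum (d + 1) x 0 = 0 := by
  rw [Tsum, Finset.range_zero, Finset.powersetCard_eq_empty.mpr (by simp), Finset.sum_empty]

lemma Tsum_step (d : ℕ) (x : ℝ) (k : ℕ) :
    Tsum (d + 1) x (k + 1) = Tsum (d + 1) x k + (x + k) * Tsum d x k := by
  have hk : k ∉ range k := by simp
  have hdisj : Disjoint (powersetCard (d + 1) (range k))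
      ((powersetCard d (range k)).image (insert k)) := by
    rw [Finset.disjoint_right]
    intro s hs hs'
    simp only [Finset.mem_image, mem_powersetCard] at hs hs'
    obtain ⟨t, ⟨ht, _⟩, rfl⟩ := hs
    exact hk (hs'.1 (Finset.mem_insert_self k t))
  rw [Tsum, Finset.range_add_one, powersetCard_succ_insert hk, Finset.sum_union hdisj]
  congr 1
  have hinj : ∀ s ∈ powersetCard d (range k), ∀ t ∈ powersetCard d (range k),
      insert k s = insert k t → s = t := by
    intro s hs t ht hst
    have h1 : k ∉ s := fun h => hk ((mem_powersetCard.mp hs).1 h)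
    have h2 : k ∉ t := fun h => hk ((mem_powersetCard.mp ht).1 h)
    have := congrArg (fun u => Finset.erase u k) hst
    simpa [Finset.erase_insert h1, Finset.erase_insert h2] using this
  rw [Finset.sum_image hinj, Tsum, Finset.mul_sum]
  apply Finset.sum_congr rfl
  intro s hs
  rw [mem_powersetCard] at hs
  have hks : k ∉ s := fun h => hk (hs.1 h)
  rw [Finset.prod_insert hks]

lemma Ttilde_zero (x : ℝ) (k : ℕ) : Ttilde 0 x k = 1 := by
  rw [Ttilde]
  have h : ∀ γ : Fin 0 → Fin k, Monotone γ := fun γ a => a.elim0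
  simp [h]

lemma Ttilde_succ_zero (d : ℕ) (x : ℝ) : Ttilde (d + 1) x 0 = 0 := by
  rw [Ttilde]
  have h : (Finset.univ.filter (fun γ : Fin (d+1) → Fin 0 => Monotone γ)) = ∅ :=
    Finset.eq_empty_of_forall_notMem (fun γ _ => (γ 0).elim0)
  rw [h, Finset.sum_empty]

lemma Ttilde_step (d : ℕ) (x : ℝ) (k : ℕ) :
    Ttilde (d + 1) x (k + 1) =
      Ttilde (d + 1) x k + (-x + ((k : ℝ) + 1)) * Ttilde d x (k + 1) := by
  classical
  rw [Ttilde,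
    ← Finset.sum_filter_add_sum_filter_not _ (fun γ => γ (Fin.last d) = Fin.last k)]
  have hA : ∑ γ ∈ (Finset.univ.filter (fun γ : Fin (d+1) → Fin (k+1) => Monotone γ)).filter
        (fun γ => γ (Fin.last d) = Fin.last k), ∏ i : Fin (d+1), (-x + ((γ i : ℕ) + 1 : ℝ))
      = (-x + ((k : ℝ) + 1)) * Ttilde d x (k + 1) := by
    rw [Ttilde, Finset.mul_sum]
    refine Finset.sum_nbij' (fun γ => γ ∘ Fin.castSucc) (fun δ => Fin.snoc δ (Fin.last k))
      ?_ ?_ ?_ ?_ ?_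
    · intro γ hγ
      simp only [Finset.mem_filter, Finset.mem_univ, true_and] at hγ ⊢
      exact hγ.1.comp Fin.strictMono_castSucc.monotone
    · intro δ hδ
      simp only [Finset.mem_filter, Finset.mem_univ, true_and] at hδ ⊢
      constructor
      · intro a b hab
        rcases Fin.eq_castSucc_or_eq_last b with ⟨j, rfl⟩ | rfl
        · rcases Fin.eq_castSucc_or_eq_last a with ⟨i, rfl⟩ | rfl
          · simp only [Fin.snoc_castSucc]
            exact hδ (by simpa using hab)
          · exact absurd hab (Fin.not_le.mpr (Fin.castSucc_lt_last j))
        · simp only [Fin.snoc_last]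
          rcases Fin.eq_castSucc_or_eq_last a with ⟨i, rfl⟩ | rfl
          · simp only [Fin.snoc_castSucc]
            exact Fin.le_last _
          · simp [Fin.snoc_last]
      · simp [Fin.snoc_last]
    · intro γ hγ
      simp only [Finset.mem_filter, Finset.mem_univ, true_and] at hγ
      funext i
      rcases Fin.eq_castSucc_or_eq_last i with ⟨j, rfl⟩ | rfl
      · simp [Fin.snoc_castSucc]
      · simp [Fin.snoc_last, hγ.2]
    · intro δ hδ
      funext i
      simp [Function.comp, Fin.snoc_castSucc]
    · intro γ hγ
      simp only [Finset.mem_filter, Finset.mem_univ, true_and] at hγ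
      rw [Fin.prod_univ_castSucc]
      have : ((γ (Fin.last d) : ℕ) : ℝ) = k := by rw [hγ.2]; simp
      rw [this]
      simp only [Function.comp]
      ring
  have hB : ∑ γ ∈ (Finset.univ.filter (fun γ : Fin (d+1) → Fin (k+1) => Monotone γ)).filter
        (fun γ => ¬ γ (Fin.last d) = Fin.last k), ∏ i : Fin (d+1), (-x + ((γ i : ℕ) + 1 : ℝ))
      = Ttilde (d + 1) x k := by
    rw [Ttilde]
    have key : ∀ γ : Fin (d+1) → Fin (k+1), Monotone γ → γ (Fin.last d) ≠ Fin.last k →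
        ∀ i, (γ i : ℕ) < k := by
      intro γ hm hne i
      have h1 : γ i ≤ γ (Fin.last d) := hm (Fin.le_last i)
      have h2 : (γ (Fin.last d) : ℕ) < k := Fin.val_lt_last hne
      exact lt_of_le_of_lt h1 h2
    refine Finset.sum_bij'
      (fun γ hγ => fun i => (⟨(γ i : ℕ),
        key γ (Finset.mem_filter.mp (Finset.mem_filter.mp hγ).1).2
          (Finset.mem_filter.mp hγ).2 i⟩ : Fin k))
      (fun δ _ => Fin.castSucc ∘ δ) ?_ ?_ ?_ ?_ ?_
    · intro γ hγ
      simp only [Finset.mem_filter, Finset.mem_univ, true_and] at hγ ⊢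
      intro a b hab
      exact hγ.1 hab
    · intro δ hδ
      simp only [Finset.mem_filter, Finset.mem_univ, true_and] at hδ ⊢
      refine ⟨Fin.strictMono_castSucc.monotone.comp hδ, fun h => ?_⟩
      have := congrArg Fin.val h
      simp at this
      omega
    · intro γ hγ
      funext i
      simp [Function.comp]
    · intro δ hδ
      funext i
      ext
      simp [Function.comp]
    · intro γ hγ
      apply Finset.prod_congr rfl
      intro i _
      simp
  rw [hA, hB]
  ring

lemma poly_ext (p q : Polynomial ℝ) (h : ∀ k : ℕ, 0 < k → p.eval (k : ℝ) = q.eval (k : ℝ)) :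
    p = q := by
  have hroots : {x : ℝ | (p - q).IsRoot x}.Infinite := by
    apply Set.Infinite.mono (s := Set.range (fun k : ℕ => ((k + 1 : ℕ) : ℝ)))
    · rintro _ ⟨k, rfl⟩
      simp only [Set.mem_setOf_eq, Polynomial.IsRoot, Polynomial.eval_sub]
      rw [h (k + 1) (Nat.succ_pos k)]
      ring
    · apply Set.infinite_range_of_injective
      intro a b hab
      have : a + 1 = b + 1 := Nat.cast_injective hab
      omega
  exact sub_eq_zero.mp (Polynomial.eq_zero_of_infinite_isRoot _ hroots)

lemma family (x : ℝ) (d : ℕ) : ∃ p : Polynomial ℝ,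
    (∀ k : ℕ, p.eval (k : ℝ) = Tsum d x k) ∧
    (∀ k : ℕ, Ttilde d x k = p.eval (-(k : ℝ))) := by
  induction d with
  | zero => exact ⟨1, fun k => by simp [Tsum_zero], fun k => by simp [Ttilde_zero]⟩
  | succ d ih =>
    obtain ⟨pd, hpd1, hpd2⟩ := ih
    set q : Polynomial ℝ := (C x + X) * pd with hq
    obtain ⟨p, hp⟩ := poly_antideriv q
    have heval : ∀ k : ℕ, p.eval (k : ℝ) = Tsum (d + 1) x k := by
      intro k
      induction k with
      | zero =>
        rw [Tsum_succ_zero]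
        simpa using hp 0
      | succ k ihk =>
        rw [hp, Finset.sum_range_succ, ← hp, ihk, Tsum_step]
        simp [hq, hpd1]
    have hcomp : ∀ y : ℝ, p.eval (y + 1) = p.eval y + q.eval y := by
      have : p.comp (X + 1) = p + q := by
        apply poly_ext
        intro k _
        rw [Polynomial.eval_comp]
        simp only [Polynomial.eval_add, Polynomial.eval_X, Polynomial.eval_one]
        have : ((k : ℝ) + 1) = ((k + 1 : ℕ) : ℝ) := by push_cast; ring
        rw [this, hp, hp, Finset.sum_range_succ]
      intro y
      have h2 := congrArg (Polynomial.eval y) this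
      simpa [Polynomial.eval_comp] using h2
    refine ⟨p, heval, fun k => ?_⟩
    induction k with
    | zero =>
      rw [Ttilde_succ_zero]
      have h0 : p.eval ((0:ℕ):ℝ) = Tsum (d+1) x 0 := heval 0
      rw [Tsum_succ_zero] at h0
      simpa using h0.symm
    | succ k ihk =>
      have hstep := Ttilde_step d x k
      have hrec := hcomp (-((k : ℝ) + 1))
      have hq2 : q.eval (-((k : ℝ) + 1)) = (x - (k + 1)) * pd.eval (-((k : ℝ) + 1)) := by
        rw [hq, Polynomial.eval_mul, Polynomial.eval_add, Polynomial.eval_C,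
          Polynomial.eval_X]
        ring
      have hT : Ttilde d x (k + 1) = pd.eval (-((k : ℝ) + 1)) := by
        have := hpd2 (k + 1); push_cast at this ⊢; linarith
      push_cast at ihk hstep hrec ⊢
      rw [hstep, ihk, hT]
      have : -((k:ℝ) + 1) + 1 = -(k:ℝ) := by ring
      rw [this] at hrec
      rw [hrec, hq2]
      ring

lemma eval_aeval (P : MvPolynomial (Fin 2) ℝ) (x y : ℝ) :
    MvPolynomial.eval ![x, y] P =
      (MvPolynomial.aeval ![Polynomial.C x, Polynomial.X] P).eval y := by
  induction P using MvPolynomial.induction_on with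
  | C a => simp
  | add p q hp hq => simp [hp, hq]
  | mul_X p n hp =>
    simp only [map_mul, MvPolynomial.eval_X, MvPolynomial.aeval_X, Polynomial.eval_mul, hp]
    congr 1
    fin_cases n <;> simp

/-- viewing `T_d(x,k)` as a polynomial in `x` and `k`,
we have `T̃_d(x,k) = T_d(x,−k)` for all positive integers `k`. -/
theorem Ttilde_eq_Tsum_neg (d : ℕ) (hd : 0 < d) (P : MvPolynomial (Fin 2) ℝ)
    (hP : ∀ (x : ℝ) (k : ℕ), 0 < k → Tsum d x k = MvPolynomial.eval ![x, (k : ℝ)] P) :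
    ∀ (x : ℝ) (k : ℕ), 0 < k →
      Ttilde d x k = MvPolynomial.eval ![x, -(k : ℝ)] P := by
  intro x k hk
  obtain ⟨p, hp1, hp2⟩ := family x d
  have hr : MvPolynomial.aeval ![Polynomial.C x, Polynomial.X] P = p := by
    apply poly_ext
    intro m hm
    rw [← eval_aeval, ← hP x m hm, hp1]
  rw [hp2 k, eval_aeval, hr]
end

section
/- Fix m ≥ 1 and set X(z) = z/(1+z)^m. For positive integers k_1, k_2, the coefficient of X_1^{k_1} X_2^{k_2} in the expansion of (X_1 ∂/∂X_1 + X_2 ∂/∂X_2) log(z_1 − z_2) (where z_i = z(X_i)) equals C(mk_1,k_1)C(mk_2,k_2) − m·C(mk_1−1,k_1−1)C(mk_2−1,k_2−1). -/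
open Finset MvPowerSeries

private abbrev MPS := MvPowerSeries (Fin 2) ℝ

lemma sum_id (m r k : ℕ) (hm : 1 ≤ m) (hr : 1 ≤ r) (hk : 1 ≤ k) :
    (m - 1) * Nat.choose (m * k - 1) (k - 1)
      + ∑ i ∈ Finset.range r,
          Nat.choose r (i+1) * (if i+1 ≤ k then Nat.choose (m * k - 1) (k - (i+1)) else 0)
    = Nat.choose (m * k + r - 1) k := by
  have hmk : 1 ≤ m * k := Nat.one_le_iff_ne_zero.mpr (by positivity)
  have hkmk : k ≤ m * k := Nat.le_mul_of_pos_left k hm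
  have h1 : m * k + r - 1 = r + (m * k - 1) := by omega
  rw [h1, Nat.add_choose_eq, Finset.Nat.sum_antidiagonal_eq_sum_range_succ_mk,
    Finset.sum_range_succ']
  -- RHS now: ∑ i in range k, C(r,i+1)*C(mk-1, k-(i+1)) + C(r,0)*C(mk-1,k-0)
  have hP : Nat.choose (m*k-1) k = (m-1) * Nat.choose (m*k-1) (k-1) := by
    have h2 := Nat.choose_succ_right_eq (m*k-1) (k-1)
    rw [Nat.sub_add_cancel hk] at h2
    have h3 : m*k - 1 - (k-1) = (m-1) * k := by
      have : (m-1) * k = m*k - k := by rw [Nat.sub_mul, one_mul]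
      omega
    rw [h3] at h2
    have h4 : Nat.choose (m*k-1) k * k = (m-1) * Nat.choose (m*k-1) (k-1) * k := by
      rw [h2]; ring
    exact Nat.eq_of_mul_eq_mul_right hk h4
  have hsum : ∑ i ∈ Finset.range r,
      Nat.choose r (i+1) * (if i+1 ≤ k then Nat.choose (m * k - 1) (k - (i+1)) else 0)
      = ∑ i ∈ Finset.range k, Nat.choose r (i+1) * Nat.choose (m*k-1) (k-(i+1)) := by
    set f : ℕ → ℕ := fun i => Nat.choose r (i+1) * (if i+1 ≤ k then Nat.choose (m * k - 1) (k - (i+1)) else 0) with hf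
    have hL : ∑ i ∈ Finset.range r, f i = ∑ i ∈ Finset.range (max r k), f i := by
      apply Finset.sum_subset (Finset.range_subset_range.mpr (le_max_left _ _))
      intro x hx hnx
      simp only [Finset.mem_range, not_lt] at hnx
      have : Nat.choose r (x+1) = 0 := Nat.choose_eq_zero_of_lt (by omega)
      simp [hf, this]
    have hR : ∑ i ∈ Finset.range k, Nat.choose r (i+1) * Nat.choose (m*k-1) (k-(i+1))
        = ∑ i ∈ Finset.range (max r k), f i := by
      rw [show ∑ i ∈ Finset.range k, Nat.choose r (i+1) * Nat.choose (m*k-1) (k-(i+1))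
          = ∑ i ∈ Finset.range k, f i from Finset.sum_congr rfl (by
            intro x hx
            simp only [Finset.mem_range] at hx
            simp [hf, Nat.succ_le_of_lt hx]
            exact fun h => absurd h (by omega))]
      apply Finset.sum_subset (Finset.range_subset_range.mpr (le_max_right _ _))
      intro x hx hnx
      simp only [Finset.mem_range, not_lt] at hnx
      simp only [hf]
      rw [if_neg (by omega)]
      simp
    rw [hL, hR]
  simp only [Prod.fst, Prod.snd] at *
  rw [hsum]
  simp only [Nat.choose_zero_right, one_mul, Nat.sub_zero, hP]
  ring


lemma coeff_natCast_mul (n : ℕ) (ψ : MPS) (μ : Fin 2 →₀ ℕ) :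
    MvPowerSeries.coeff μ ((n : MPS) * ψ) = n * MvPowerSeries.coeff μ ψ := by
  rw [← nsmul_eq_mul, map_nsmul, nsmul_eq_mul]

lemma coeff_castsub_mul (n : ℕ) (ψ : MPS) (μ : Fin 2 →₀ ℕ) :
    MvPowerSeries.coeff μ (((n : MPS) - 1) * ψ)
      = ((n : ℝ) - 1) * MvPowerSeries.coeff μ ψ := by
  rw [sub_mul, one_mul, map_sub, coeff_natCast_mul]; ring

lemma coeff_X_pow_mul (s : Fin 2) (j : ℕ) (ψ : MPS) (μ : Fin 2 →₀ ℕ) :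
    MvPowerSeries.coeff μ ((MvPowerSeries.X s) ^ j * ψ)
      = if j ≤ μ s then MvPowerSeries.coeff (μ - Finsupp.single s j) ψ else 0 := by
  rw [MvPowerSeries.X_pow_eq, MvPowerSeries.coeff_monomial_mul]
  simp [Finsupp.single_le_iff]

lemma coeff_X_mul' (s : Fin 2) (ψ : MPS) (μ : Fin 2 →₀ ℕ) :
    MvPowerSeries.coeff μ ((MvPowerSeries.X s) * ψ)
      = if 1 ≤ μ s then MvPowerSeries.coeff (μ - Finsupp.single s 1) ψ else 0 := by
  rw [← pow_one (MvPowerSeries.X s (R := ℝ)), coeff_X_pow_mul]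

lemma hW0 (m : ℕ) (Z : MPS) (hZ0 : MvPowerSeries.constantCoeff Z = 0) :
    MvPowerSeries.constantCoeff (1 + Z - (m : MPS) * Z) = 1 := by
  simp [hZ0]

lemma hWinv (m : ℕ) (s : Fin 2) (Z : MPS)
    (hZ0 : MvPowerSeries.constantCoeff Z = 0)
    (hZ : Z = MvPowerSeries.X s * (1 + Z) ^ m) :
    (1 + Z - (m : MPS) * Z)⁻¹
      = 1 + ((m : MPS) - 1) * (MvPowerSeries.X s *
          ((1 + Z) ^ m * (1 + Z - (m : MPS) * Z)⁻¹)) := by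
  have h0 : MvPowerSeries.constantCoeff (1 + Z - (m : MPS) * Z) ≠ 0 := by
    rw [hW0 m Z hZ0]; norm_num
  have h1 : (1 + Z - (m : MPS) * Z) * (1 + Z - (m : MPS) * Z)⁻¹ = 1 :=
    MvPowerSeries.mul_inv_cancel _ h0
  have h2 : (1 + Z - (m : MPS) * Z)⁻¹
      = 1 + ((m : MPS) - 1) * (Z * (1 + Z - (m : MPS) * Z)⁻¹) := by
    have h3 : (1 + Z - (m : MPS) * Z)⁻¹
        = (1 + Z - (m : MPS) * Z) * (1 + Z - (m : MPS) * Z)⁻¹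
          + ((m : MPS) - 1) * (Z * (1 + Z - (m : MPS) * Z)⁻¹) := by ring
    conv_lhs => rw [h3, h1]
  have h3 : Z * (1 + Z - (m : MPS) * Z)⁻¹
      = (MvPowerSeries.X s * (1 + Z) ^ m) * (1 + Z - (m : MPS) * Z)⁻¹ := by rw [← hZ]
  conv_lhs => rw [h2]
  rw [h3, mul_assoc]

lemma hexp_lemma (m r : ℕ) (s : Fin 2) (Z : MPS)
    (hZ : Z = MvPowerSeries.X s * (1 + Z) ^ m) :
    (1 + Z) ^ r * (1 + Z - (m : MPS) * Z)⁻¹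
      = (1 + Z - (m : MPS) * Z)⁻¹
        + ∑ i ∈ Finset.range r, (r.choose (i+1) : MPS) *
            ((MvPowerSeries.X s) ^ (i+1) *
              ((1 + Z) ^ (m*(i+1)) * (1 + Z - (m : MPS) * Z)⁻¹)) := by
  have h1 : (1 + Z) ^ r
      = ∑ j ∈ Finset.range (r+1),
          (MvPowerSeries.X s) ^ j * (1 + Z) ^ (m*j) * (r.choose j : MPS) := by
    have hx : (1 : MPS) + Z = MvPowerSeries.X s * (1 + Z) ^ m + 1 := by
      rw [← hZ, add_comm]
    conv_lhs => rw [hx]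
    rw [add_pow]
    refine Finset.sum_congr rfl fun j _ => ?_
    rw [mul_pow, ← pow_mul, one_pow, mul_one]
  rw [h1, Finset.sum_mul, Finset.sum_range_succ']
  rw [show (MvPowerSeries.X s (R := ℝ)) ^ 0 * (1 + Z) ^ (m*0) * ((r.choose 0 : ℕ) : MPS)
      = 1 by simp]
  rw [one_mul, add_comm]
  congr 1
  refine Finset.sum_congr rfl fun i _ => ?_
  ring

lemma key (m : ℕ) (hm : 1 ≤ m) (s t : Fin 2) (hst : s ≠ t)
    (hcover : ∀ u : Fin 2, u = s ∨ u = t) (Z : MPS)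
    (hZ0 : MvPowerSeries.constantCoeff Z = 0)
    (hZ : Z = MvPowerSeries.X s * (1 + Z) ^ m) :
    ∀ n : ℕ, ∀ μ : Fin 2 →₀ ℕ, μ s = n → ∀ r : ℕ, 1 ≤ r →
      MvPowerSeries.coeff μ ((1 + Z) ^ r * (1 + Z - (m : MPS) * Z)⁻¹)
      = if μ t = 0 then ((m * n + r - 1).choose n : ℝ) else 0 := by
  intro n
  induction n using Nat.strong_induction_on with
  | _ n IH =>
  intro μ hμs r hr
  have e1 : MvPowerSeries.coeff μ ((1 + Z) ^ r * (1 + Z - (m : MPS) * Z)⁻¹)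
      = ((if μ = 0 then (1:ℝ) else 0)
          + ((m:ℝ) - 1) * (if 1 ≤ μ s then
              MvPowerSeries.coeff (μ - Finsupp.single s 1)
                ((1 + Z) ^ m * (1 + Z - (m : MPS) * Z)⁻¹) else 0))
        + ∑ i ∈ Finset.range r, (r.choose (i+1) : ℝ) *
            (if i+1 ≤ μ s then
              MvPowerSeries.coeff (μ - Finsupp.single s (i+1))
                ((1 + Z) ^ (m*(i+1)) * (1 + Z - (m : MPS) * Z)⁻¹) else 0) := by
    rw [hexp_lemma m r s Z hZ, map_add]
    congr 1
    · conv_lhs => rw [hWinv m s Z hZ0 hZ]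
      rw [map_add, MvPowerSeries.coeff_one, coeff_castsub_mul, coeff_X_mul']
    · rw [map_sum]
      refine Finset.sum_congr rfl fun i _ => ?_
      rw [coeff_natCast_mul, coeff_X_pow_mul]
  rw [e1, hμs]
  by_cases hn0 : n = 0
  · subst hn0
    have hz : ∀ i ∈ Finset.range r, (r.choose (i+1) : ℝ) *
        (if i+1 ≤ 0 then
          MvPowerSeries.coeff (μ - Finsupp.single s (i+1))
            ((1 + Z) ^ (m*(i+1)) * (1 + Z - (m : MPS) * Z)⁻¹) else 0) = 0 := by
      intro i _; rw [if_neg (by omega), mul_zero]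
    rw [Finset.sum_eq_zero hz, if_neg (show ¬ (1:ℕ) ≤ 0 by omega), mul_zero,
      add_zero, add_zero]
    have hiff : (μ = 0) ↔ (μ t = 0) := by
      constructor
      · intro h; simp [h]
      · intro h
        ext u
        rcases hcover u with rfl | rfl
        · simpa using hμs
        · simpa using h
    by_cases hμt : μ t = 0
    · rw [if_pos (hiff.mpr hμt), if_pos hμt]
      simp
    · rw [if_neg (fun h => hμt (hiff.mp h)), if_neg hμt]
  · -- n ≥ 1
    have hn : 1 ≤ n := Nat.one_le_iff_ne_zero.mpr hn0
    have hμne : ¬ (μ = 0) := fun h => hn0 (by rw [h] at hμs; simpa using hμs.symm)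
    rw [if_neg hμne, if_pos hn]
    have hsubt : ∀ j : ℕ, (μ - Finsupp.single s j) t = μ t := by
      intro j
      rw [Finsupp.tsub_apply, Finsupp.single_eq_of_ne' hst, Nat.sub_zero]
    have hsubs : ∀ j : ℕ, (μ - Finsupp.single s j) s = n - j := by
      intro j
      rw [Finsupp.tsub_apply, Finsupp.single_eq_same, hμs]
    -- rewrite the (m-1) term via IH
    have hIH1 : MvPowerSeries.coeff (μ - Finsupp.single s 1)
        ((1 + Z) ^ m * (1 + Z - (m : MPS) * Z)⁻¹)
        = if μ t = 0 then ((m * (n-1) + m - 1).choose (n-1) : ℝ) else 0 := by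
      rw [IH (n-1) (by omega) _ (hsubs 1) m hm, hsubt]
    have hIH2 : ∀ i : ℕ, i + 1 ≤ n →
        MvPowerSeries.coeff (μ - Finsupp.single s (i+1))
          ((1 + Z) ^ (m*(i+1)) * (1 + Z - (m : MPS) * Z)⁻¹)
        = if μ t = 0 then ((m * (n-(i+1)) + m*(i+1) - 1).choose (n-(i+1)) : ℝ) else 0 := by
      intro i hi
      rw [IH (n-(i+1)) (by omega) _ (hsubs (i+1)) (m*(i+1)) (Nat.mul_pos hm (by omega)), hsubt]
    rw [hIH1]
    by_cases hμt : μ t = 0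
    · rw [if_pos hμt, if_pos hμt]
      have hsum : ∑ i ∈ Finset.range r, (r.choose (i+1) : ℝ) *
          (if i+1 ≤ n then
            MvPowerSeries.coeff (μ - Finsupp.single s (i+1))
              ((1 + Z) ^ (m*(i+1)) * (1 + Z - (m : MPS) * Z)⁻¹) else 0)
          = ∑ i ∈ Finset.range r, (r.choose (i+1) : ℝ) *
              (if i+1 ≤ n then ((m*n - 1).choose (n-(i+1)) : ℝ) else 0) := by
        refine Finset.sum_congr rfl fun i _ => ?_
        congr 1
        split_ifs with hi
        · rw [hIH2 i hi, if_pos hμt]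
          congr 2
          have : m * (n - (i+1)) + m * (i+1) = m * n := by
            rw [← Nat.left_distrib, Nat.sub_add_cancel hi]
          omega
        · rfl
      rw [hsum]
      have harith1 : m * (n-1) + m - 1 = m * n - 1 := by
        have : m * (n-1) + m * 1 = m * n := by
          rw [← Nat.left_distrib, Nat.sub_add_cancel hn]
        omega
      rw [harith1]
      have hid := sum_id m r n hm hr hn
      have hid' := congrArg (Nat.cast : ℕ → ℝ) hid
      push_cast [Nat.cast_sub hm] at hid'
      rw [zero_add]
      convert hid' using 2
    · rw [if_neg hμt, if_neg hμt, mul_zero, zero_add, zero_add]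
      refine Finset.sum_eq_zero fun i _ => ?_
      split_ifs with hi
      · rw [hIH2 i hi, if_neg hμt, mul_zero]
      · rw [mul_zero]

set_option maxHeartbeats 1000000 in
lemma coeff_prod_single (A B : MPS) (a b : ℝ) (k₁ k₂ : ℕ)
    (hA : ∀ p : Fin 2 →₀ ℕ, p 1 ≠ 0 → MvPowerSeries.coeff p A = 0)
    (hB : ∀ p : Fin 2 →₀ ℕ, p 0 ≠ 0 → MvPowerSeries.coeff p B = 0)
    (hA1 : MvPowerSeries.coeff (Finsupp.single 0 k₁) A = a)
    (hB1 : MvPowerSeries.coeff (Finsupp.single 1 k₂) B = b) :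
    MvPowerSeries.coeff (Finsupp.single 0 k₁ + Finsupp.single 1 k₂) (A * B)
      = a * b := by
  rw [MvPowerSeries.coeff_mul]
  rw [Finset.sum_eq_single (Finsupp.single 0 k₁, Finsupp.single 1 k₂)]
  · rw [hA1, hB1]
  · intro c hc hne
    by_cases h1 : c.1 1 = 0
    swap
    · rw [hA _ h1, zero_mul]
    by_cases h2 : c.2 0 = 0
    swap
    · rw [hB _ h2, mul_zero]
    exfalso
    apply hne
    rw [Finset.HasAntidiagonal.mem_antidiagonal] at hc
    have hsum : c.1 + c.2 = Finsupp.single 0 k₁ + Finsupp.single 1 k₂ := hc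
    have h0 := DFunLike.congr_fun hsum 0
    have h1' := DFunLike.congr_fun hsum 1
    simp only [Finsupp.add_apply, Finsupp.single_eq_same,
      Finsupp.single_eq_of_ne (show (0:Fin 2) ≠ 1 by decide),
      Finsupp.single_eq_of_ne (show (1:Fin 2) ≠ 0 by decide),
      add_zero, zero_add] at h0 h1'
    have hc1 : c.1 = Finsupp.single 0 k₁ := by
      ext u
      fin_cases u
      · simp [show c.1 0 = k₁ by omega]
      · simp [h1]
    have hc2 : c.2 = Finsupp.single 1 k₂ := by
      ext u
      fin_cases u
      · simp [h2]
      · simp [show c.2 1 = k₂ by omega]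
    exact Prod.ext hc1 hc2
  · intro hnm
    rw [Finset.HasAntidiagonal.mem_antidiagonal] at hnm
    exact absurd rfl hnm


/-- Fix `m ≥ 1` and `X(z) = z/(1+z)^m`.  Let `z₁ = z(X₁)`,
`z₂ = z(X₂)` be the two power series (in the two variables `X₁, X₂`) with zero
constant term satisfying `zᵢ = Xᵢ(1+zᵢ)^m`.  The Euler operator applied to
`log(z₁−z₂)` equals `((1+z₁)(1+z₂) − m z₁ z₂)/((1+z₁−m z₁)(1+z₂−m z₂))`, and the
coefficient of `X₁^{k₁} X₂^{k₂}` in this bivariate expansion equals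
`C(mk₁,k₁)C(mk₂,k₂) − m·C(mk₁−1,k₁−1)C(mk₂−1,k₂−1)`. -/
theorem euler_log_coeff (m : ℕ) (hm : 1 ≤ m)
    (Z₁ Z₂ : MvPowerSeries (Fin 2) ℝ)
    (hZ₁0 : MvPowerSeries.constantCoeff Z₁ = 0)
    (hZ₂0 : MvPowerSeries.constantCoeff Z₂ = 0)
    (hZ₁ : Z₁ = MvPowerSeries.X 0 * (1 + Z₁) ^ m)
    (hZ₂ : Z₂ = MvPowerSeries.X 1 * (1 + Z₂) ^ m)
    (k₁ k₂ : ℕ) (hk₁ : 1 ≤ k₁) (hk₂ : 1 ≤ k₂) :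
    MvPowerSeries.coeff (Finsupp.single 0 k₁ + Finsupp.single 1 k₂)
      (((1 + Z₁) * (1 + Z₂) - (m : MvPowerSeries (Fin 2) ℝ) * Z₁ * Z₂) *
        ((1 + Z₁ - (m : MvPowerSeries (Fin 2) ℝ) * Z₁) *
          (1 + Z₂ - (m : MvPowerSeries (Fin 2) ℝ) * Z₂))⁻¹)
    = ((m * k₁).choose k₁ : ℝ) * ((m * k₂).choose k₂ : ℝ)
      - (m : ℝ) * ((m * k₁ - 1).choose (k₁ - 1) : ℝ) *
          ((m * k₂ - 1).choose (k₂ - 1) : ℝ) := by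
  have h01 : (0 : Fin 2) ≠ 1 := by decide
  have h10 : (1 : Fin 2) ≠ 0 := by decide
  have hcov0 : ∀ u : Fin 2, u = 0 ∨ u = 1 := by decide
  have hcov1 : ∀ u : Fin 2, u = 1 ∨ u = 0 := by decide
  -- coefficients of the four building blocks
  have hG1 : ∀ p : Fin 2 →₀ ℕ,
      MvPowerSeries.coeff p ((1 + Z₁) * (1 + Z₁ - (m : MPS) * Z₁)⁻¹)
        = if p 1 = 0 then ((m * (p 0)).choose (p 0) : ℝ) else 0 := by
    intro p
    have h := key m hm 0 1 h01 hcov0 Z₁ hZ₁0 hZ₁ (p 0) p rfl 1 le_rfl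
    rw [pow_one] at h
    rw [h]
    simp only [Nat.add_sub_cancel]
  have hG2 : ∀ p : Fin 2 →₀ ℕ,
      MvPowerSeries.coeff p ((1 + Z₂) * (1 + Z₂ - (m : MPS) * Z₂)⁻¹)
        = if p 0 = 0 then ((m * (p 1)).choose (p 1) : ℝ) else 0 := by
    intro p
    have h := key m hm 1 0 h10 hcov1 Z₂ hZ₂0 hZ₂ (p 1) p rfl 1 le_rfl
    rw [pow_one] at h
    rw [h]
    simp only [Nat.add_sub_cancel]
  have hH1 : ∀ p : Fin 2 →₀ ℕ,
      MvPowerSeries.coeff p (Z₁ * (1 + Z₁ - (m : MPS) * Z₁)⁻¹)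
        = if 1 ≤ p 0 then
            (if p 1 = 0 then ((m * (p 0) - 1).choose (p 0 - 1) : ℝ) else 0)
          else 0 := by
    intro p
    have hzw : Z₁ * (1 + Z₁ - (m : MPS) * Z₁)⁻¹
        = (MvPowerSeries.X 0 * (1 + Z₁) ^ m) * (1 + Z₁ - (m : MPS) * Z₁)⁻¹ := by
      rw [← hZ₁]
    rw [hzw, mul_assoc, coeff_X_mul']
    have hks : (p - Finsupp.single (0:Fin 2) (1:ℕ)) 0 = p 0 - 1 := by
      rw [Finsupp.tsub_apply, Finsupp.single_eq_same]
    have ht : (p - Finsupp.single (0:Fin 2) (1:ℕ)) 1 = p 1 := by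
      rw [Finsupp.tsub_apply, Finsupp.single_eq_of_ne' h01, Nat.sub_zero]
    have h := key m hm 0 1 h01 hcov0 Z₁ hZ₁0 hZ₁ (p 0 - 1)
      (p - Finsupp.single (0:Fin 2) (1:ℕ)) hks m hm
    rw [ht] at h
    rw [h]
    by_cases h1c : 1 ≤ p 0
    · rw [if_pos h1c, if_pos h1c]
      by_cases h2c : p 1 = 0
      · rw [if_pos h2c, if_pos h2c]
        congr 2
        have : m * (p 0 - 1) + m * 1 = m * (p 0) := by
          rw [← Nat.left_distrib, Nat.sub_add_cancel h1c]
        omega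
      · rw [if_neg h2c, if_neg h2c]
    · rw [if_neg h1c, if_neg h1c]
  have hH2 : ∀ p : Fin 2 →₀ ℕ,
      MvPowerSeries.coeff p (Z₂ * (1 + Z₂ - (m : MPS) * Z₂)⁻¹)
        = if 1 ≤ p 1 then
            (if p 0 = 0 then ((m * (p 1) - 1).choose (p 1 - 1) : ℝ) else 0)
          else 0 := by
    intro p
    have hzw : Z₂ * (1 + Z₂ - (m : MPS) * Z₂)⁻¹
        = (MvPowerSeries.X 1 * (1 + Z₂) ^ m) * (1 + Z₂ - (m : MPS) * Z₂)⁻¹ := by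
      rw [← hZ₂]
    rw [hzw, mul_assoc, coeff_X_mul']
    have hks : (p - Finsupp.single (1:Fin 2) (1:ℕ)) 1 = p 1 - 1 := by
      rw [Finsupp.tsub_apply, Finsupp.single_eq_same]
    have ht : (p - Finsupp.single (1:Fin 2) (1:ℕ)) 0 = p 0 := by
      rw [Finsupp.tsub_apply, Finsupp.single_eq_of_ne' h10, Nat.sub_zero]
    have h := key m hm 1 0 h10 hcov1 Z₂ hZ₂0 hZ₂ (p 1 - 1)
      (p - Finsupp.single (1:Fin 2) (1:ℕ)) hks m hm
    rw [ht] at h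
    rw [h]
    by_cases h1c : 1 ≤ p 1
    · rw [if_pos h1c, if_pos h1c]
      by_cases h2c : p 0 = 0
      · rw [if_pos h2c, if_pos h2c]
        congr 2
        have : m * (p 1 - 1) + m * 1 = m * (p 1) := by
          rw [← Nat.left_distrib, Nat.sub_add_cancel h1c]
        omega
      · rw [if_neg h2c, if_neg h2c]
    · rw [if_neg h1c, if_neg h1c]
  have hfact : ((1 + Z₁) * (1 + Z₂) - (m : MPS) * Z₁ * Z₂) *
      ((1 + Z₁ - (m : MPS) * Z₁) * (1 + Z₂ - (m : MPS) * Z₂))⁻¹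
      = ((1 + Z₁) * (1 + Z₁ - (m : MPS) * Z₁)⁻¹) *
          ((1 + Z₂) * (1 + Z₂ - (m : MPS) * Z₂)⁻¹)
        - (m : MPS) * ((Z₁ * (1 + Z₁ - (m : MPS) * Z₁)⁻¹) *
            (Z₂ * (1 + Z₂ - (m : MPS) * Z₂)⁻¹)) := by
    rw [MvPowerSeries.mul_inv_rev]
    ring
  rw [hfact, map_sub, coeff_natCast_mul]
  have eG := coeff_prod_single ((1 + Z₁) * (1 + Z₁ - (m : MPS) * Z₁)⁻¹)
      ((1 + Z₂) * (1 + Z₂ - (m : MPS) * Z₂)⁻¹)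
      ((m * k₁).choose k₁ : ℝ) ((m * k₂).choose k₂ : ℝ) k₁ k₂
      (fun p hp => by rw [hG1 p, if_neg hp])
      (fun p hp => by rw [hG2 p, if_neg hp])
      (by rw [hG1]
          rw [if_pos (Finsupp.single_eq_of_ne' h01), Finsupp.single_eq_same])
      (by rw [hG2]
          rw [if_pos (Finsupp.single_eq_of_ne' h10), Finsupp.single_eq_same])
  have eH := coeff_prod_single (Z₁ * (1 + Z₁ - (m : MPS) * Z₁)⁻¹)
      (Z₂ * (1 + Z₂ - (m : MPS) * Z₂)⁻¹)
      ((m * k₁ - 1).choose (k₁ - 1) : ℝ) ((m * k₂ - 1).choose (k₂ - 1) : ℝ) k₁ k₂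
      (fun p hp => by rw [hH1 p]; simp [hp])
      (fun p hp => by rw [hH2 p]; simp [hp])
      (by rw [hH1]
          rw [Finsupp.single_eq_same, if_pos hk₁,
            if_pos (Finsupp.single_eq_of_ne' h01)])
      (by rw [hH2]
          rw [Finsupp.single_eq_same, if_pos hk₂,
            if_pos (Finsupp.single_eq_of_ne' h10)])
  rw [eG, eH]
  ring
end

section
/- Fix m ≥ 1 and positive integers k_1, k_2. Then ((k_1+k_2) · m/(m(k_1+k_2)−k_1−k_2)) · C(mk_1−1,k_1) · C(mk_2−1,k_2) = C(mk_1,k_1)C(mk_2,k_2) − m·C(mk_1−1,k_1−1)C(mk_2−1,k_2−1). -/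
/-- Fix `m ≥ 1` and positive integers `k₁, k₂`.  Then
`((k₁+k₂)·m/(m(k₁+k₂)−k₁−k₂))·C(mk₁−1,k₁)·C(mk₂−1,k₂)
  = C(mk₁,k₁)C(mk₂,k₂) − m·C(mk₁−1,k₁−1)C(mk₂−1,k₂−1)`. -/
theorem bms_two_point_identity (m k₁ k₂ : ℕ) (hm : 1 ≤ m) (hk₁ : 0 < k₁) (hk₂ : 0 < k₂) :
    ((k₁ : ℝ) + k₂) * (m : ℝ) /
        ((m : ℝ) * ((k₁ : ℝ) + k₂) - (k₁ : ℝ) - (k₂ : ℝ)) *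
        ((m * k₁ - 1).choose k₁ : ℝ) * ((m * k₂ - 1).choose k₂ : ℝ)
    = ((m * k₁).choose k₁ : ℝ) * ((m * k₂).choose k₂ : ℝ)
      - (m : ℝ) * ((m * k₁ - 1).choose (k₁ - 1) : ℝ) *
          ((m * k₂ - 1).choose (k₂ - 1) : ℝ) := by
  rcases eq_or_lt_of_le hm with h1 | h2
  · -- m = 1
    subst h1
    have e1 : (1 * k₁ - 1).choose k₁ = 0 := Nat.choose_eq_zero_of_lt (by omega)
    have e2 : (1 * k₁ - 1).choose (k₁ - 1) = 1 := by rw [one_mul]; exact Nat.choose_self _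
    have e3 : (1 * k₂ - 1).choose (k₂ - 1) = 1 := by rw [one_mul]; exact Nat.choose_self _
    have e4 : (1 * k₁).choose k₁ = 1 := by rw [one_mul]; exact Nat.choose_self _
    have e5 : (1 * k₂).choose k₂ = 1 := by rw [one_mul]; exact Nat.choose_self _
    rw [e1, e2, e3, e4, e5]
    push_cast
    ring
  · -- 2 ≤ m
    have hm2 : 2 ≤ m := h2
    have hn1 : m * k₁ - 1 + 1 = m * k₁ := by
      have : 1 ≤ m * k₁ := Nat.one_le_iff_ne_zero.mpr (by positivity)
      omega
    have hn2 : m * k₂ - 1 + 1 = m * k₂ := by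
      have : 1 ≤ m * k₂ := Nat.one_le_iff_ne_zero.mpr (by positivity)
      omega
    -- natural number identities
    have f1 : (m * k₁ - 1).choose k₁ * (m * k₁) = (m * k₁).choose k₁ * ((m - 1) * k₁) := by
      have := Nat.choose_mul_succ_eq (m * k₁ - 1) k₁
      rw [hn1] at this
      rw [this]
      congr 1
      have : k₁ ≤ m * k₁ := Nat.le_mul_of_pos_left _ (by omega)
      cases m with
      | zero => omega
      | succ m' => simp [Nat.succ_mul]
    have f2 : (m * k₂ - 1).choose k₂ * (m * k₂) = (m * k₂).choose k₂ * ((m - 1) * k₂) := by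
      have := Nat.choose_mul_succ_eq (m * k₂ - 1) k₂
      rw [hn2] at this
      rw [this]
      congr 1
      cases m with
      | zero => omega
      | succ m' => simp [Nat.succ_mul]
    have g1 : m * k₁ * (m * k₁ - 1).choose (k₁ - 1) = (m * k₁).choose k₁ * k₁ := by
      have := Nat.add_one_mul_choose_eq (m * k₁ - 1) (k₁ - 1)
      rw [hn1] at this
      have hk : k₁ - 1 + 1 = k₁ := by omega
      rw [hk] at this
      exact this
    have g2 : m * k₂ * (m * k₂ - 1).choose (k₂ - 1) = (m * k₂).choose k₂ * k₂ := by
      have := Nat.add_one_mul_choose_eq (m * k₂ - 1) (k₂ - 1)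
      rw [hn2] at this
      have hk : k₂ - 1 + 1 = k₂ := by omega
      rw [hk] at this
      exact this
    -- cast to ℝ
    have F1 : ((m * k₁ - 1).choose k₁ : ℝ) * (m * k₁) = ((m * k₁).choose k₁ : ℝ) * (((m:ℝ) - 1) * k₁) := by
      have := congrArg (Nat.cast (R := ℝ)) f1
      push_cast [Nat.cast_sub (by omega : 1 ≤ m)] at this ⊢
      linarith [this]
    have F2 : ((m * k₂ - 1).choose k₂ : ℝ) * (m * k₂) = ((m * k₂).choose k₂ : ℝ) * (((m:ℝ) - 1) * k₂) := by
      have := congrArg (Nat.cast (R := ℝ)) f2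
      push_cast [Nat.cast_sub (by omega : 1 ≤ m)] at this ⊢
      linarith [this]
    have G1 : (m : ℝ) * k₁ * ((m * k₁ - 1).choose (k₁ - 1) : ℝ) = ((m * k₁).choose k₁ : ℝ) * k₁ := by
      exact_mod_cast congrArg (Nat.cast (R := ℝ)) g1
    have G2 : (m : ℝ) * k₂ * ((m * k₂ - 1).choose (k₂ - 1) : ℝ) = ((m * k₂).choose k₂ : ℝ) * k₂ := by
      exact_mod_cast congrArg (Nat.cast (R := ℝ)) g2
    -- now pure real algebra
    set A := ((m * k₁ - 1).choose k₁ : ℝ)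
    set B := ((m * k₂ - 1).choose k₂ : ℝ)
    set A' := ((m * k₁ - 1).choose (k₁ - 1) : ℝ)
    set B' := ((m * k₂ - 1).choose (k₂ - 1) : ℝ)
    set P := ((m * k₁).choose k₁ : ℝ)
    set Q := ((m * k₂).choose k₂ : ℝ)
    have hmR : (2:ℝ) ≤ m := by exact_mod_cast hm2
    have hk1R : (0:ℝ) < k₁ := by exact_mod_cast hk₁
    have hk2R : (0:ℝ) < k₂ := by exact_mod_cast hk₂
    have hden : (m:ℝ) * ((k₁:ℝ) + k₂) - k₁ - k₂ ≠ 0 := by nlinarith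
    have hm0 : (m:ℝ) ≠ 0 := by linarith
    have hA : A = P * ((m:ℝ) - 1) / m := by
      have h : (A * m) * k₁ = (P * ((m:ℝ) - 1)) * k₁ := by linear_combination F1
      have h2 := mul_right_cancel₀ (ne_of_gt hk1R) h
      field_simp
      linarith
    have hB : B = Q * ((m:ℝ) - 1) / m := by
      have h : (B * m) * k₂ = (Q * ((m:ℝ) - 1)) * k₂ := by linear_combination F2
      have h2 := mul_right_cancel₀ (ne_of_gt hk2R) h
      field_simp
      linarith
    have hA' : A' = P / m := by
      have h : (A' * m) * k₁ = P * k₁ := by linear_combination G1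
      have h2 := mul_right_cancel₀ (ne_of_gt hk1R) h
      field_simp
      linarith
    have hB' : B' = Q / m := by
      have h : (B' * m) * k₂ = Q * k₂ := by linear_combination G2
      have h2 := mul_right_cancel₀ (ne_of_gt hk2R) h
      field_simp
      linarith
    rw [hA, hB, hA', hB']
    rw [div_mul_eq_mul_div, div_mul_eq_mul_div, div_eq_iff hden]
    field_simp
    ring
end

section
/- With P_k(l) = Π_{i=0}^{k−1}(1+ℏ(l+i+1/2)), for all t ≥ 0: (Δ^t P_k^m)(l)/t! = Σ_{i_1+...+i_m=t} ℏ^t Π_{j=1}^m ((k)_{i_j}/i_j!) · P_{k−i_j}(l − i_{j+1} − ... − i_m), where the sum runs over ordered m-tuples of nonnegative integers. -/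
/-- The backward difference operator `(Δf)(l) = f(l) − f(l−1)`. -/
noncomputable def bdiff (f : ℝ → ℝ) : ℝ → ℝ := fun l => f l - f (l - 1)

/-- `P_k(l) = ∏_{i=0}^{k−1} (1 + ℏ(l+i+1/2))`. -/
noncomputable def Ppoly (h : ℝ) (k : ℕ) (l : ℝ) : ℝ :=
  ∏ i ∈ Finset.range k, (1 + h * (l + (i : ℝ) + 1 / 2))

lemma bdiff_iter_add (t : ℕ) : ∀ (f g : ℝ → ℝ) (l : ℝ),
    bdiff^[t] (fun x => f x + g x) l = bdiff^[t] f l + bdiff^[t] g l := by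
  induction t with
  | zero => intro f g l; simp
  | succ t ih =>
    intro f g l
    rw [Function.iterate_succ_apply, Function.iterate_succ_apply,
      Function.iterate_succ_apply]
    have : bdiff (fun x => f x + g x) = fun x => bdiff f x + bdiff g x := by
      funext x; simp [bdiff]; ring
    rw [this, ih]

lemma bdiff_iter_shift (t : ℕ) : ∀ (f : ℝ → ℝ) (c l : ℝ),
    bdiff^[t] (fun x => f (x - c)) l = bdiff^[t] f (l - c) := by
  induction t with
  | zero => intro f c l; simp
  | succ t ih =>
    intro f c l
    rw [Function.iterate_succ_apply, Function.iterate_succ_apply]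
    have : bdiff (fun x => f (x - c)) = fun x => (bdiff f) (x - c) := by
      funext x
      simp only [bdiff]
      ring_nf
    rw [this, ih]

lemma bdiff_iter_zero (t : ℕ) (l : ℝ) : bdiff^[t] (fun _ => (0:ℝ)) l = 0 := by
  induction t generalizing l with
  | zero => simp
  | succ t ih =>
    rw [Function.iterate_succ_apply]
    have : bdiff (fun _ => (0:ℝ)) = fun _ => (0:ℝ) := by funext x; simp [bdiff]
    rw [this, ih]

lemma bdiff_Ppoly (h : ℝ) (k : ℕ) :
    bdiff (Ppoly h k) = fun x => h * k * Ppoly h (k - 1) x := by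
  funext x
  cases k with
  | zero => simp [bdiff, Ppoly]
  | succ k =>
    simp only [bdiff, Ppoly, Nat.add_sub_cancel]
    rw [Finset.prod_range_succ, Finset.prod_range_succ']
    push_cast
    have : ∀ i ∈ Finset.range k, (1 + h * (x - 1 + ((i:ℝ) + 1) + 1/2))
        = (1 + h * (x + (i:ℝ) + 1/2)) := by
      intro i _; ring_nf
    rw [Finset.prod_congr rfl this]
    ring

lemma bdiff_iter_const_mul (t : ℕ) : ∀ (c : ℝ) (f : ℝ → ℝ) (l : ℝ),
    bdiff^[t] (fun x => c * f x) l = c * bdiff^[t] f l := by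
  induction t with
  | zero => intro c f l; simp
  | succ t ih =>
    intro c f l
    rw [Function.iterate_succ_apply, Function.iterate_succ_apply]
    have : bdiff (fun x => c * f x) = fun x => c * bdiff f x := by
      funext x; simp [bdiff]; ring
    rw [this, ih]

lemma bdiff_iter_Ppoly (h : ℝ) (t : ℕ) : ∀ (k : ℕ) (l : ℝ),
    bdiff^[t] (Ppoly h k) l = h ^ t * (k.descFactorial t : ℝ) * Ppoly h (k - t) l := by
  induction t with
  | zero => intro k l; simp
  | succ t ih =>
    intro k l
    rw [Function.iterate_succ_apply, bdiff_Ppoly, bdiff_iter_const_mul, ih]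
    have hd : (k.descFactorial (t + 1) : ℝ) = (k : ℝ) * ((k-1).descFactorial t : ℝ) := by
      cases k with
      | zero => simp
      | succ k => rw [Nat.succ_descFactorial_succ]; push_cast; ring
    have hk : k - 1 - t = k - (t + 1) := by omega
    rw [hk] at *
    rw [hd]; ring

lemma bdiff_iter_mul (t : ℕ) : ∀ (f g : ℝ → ℝ) (l : ℝ),
    bdiff^[t] (fun x => f x * g x) l
      = ∑ p ∈ Finset.HasAntidiagonal.antidiagonal t,
          (t.choose p.1 : ℝ) * (bdiff^[p.1] f (l - (p.2 : ℝ)) * bdiff^[p.2] g l) := by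
  induction t with
  | zero => intro f g l; simp
  | succ t ih =>
    intro f g l
    rw [Function.iterate_succ_apply]
    have : bdiff (fun x => f x * g x)
        = fun x => (bdiff f x * g x) + ((fun y => f (y - 1)) x * bdiff g x) := by
      funext x; simp [bdiff]; ring
    rw [this, bdiff_iter_add, ih, ih]
    -- second sum: shift the f argument
    have h2 : ∀ p ∈ Finset.HasAntidiagonal.antidiagonal t,
        (t.choose p.1 : ℝ) * (bdiff^[p.1] (fun y => f (y - 1)) (l - (p.2:ℝ)) * bdiff^[p.2] (bdiff g) l)
        = (t.choose p.1 : ℝ) * (bdiff^[p.1] f (l - ((p.2:ℝ) + 1)) * bdiff^[p.2 + 1] g l) := by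
      intro p _
      rw [bdiff_iter_shift, Function.iterate_succ_apply]
      ring_nf
    rw [Finset.sum_congr rfl h2]
    -- first sum: bdiff^[p.1] (bdiff f) = bdiff^[p.1+1] f
    have h1 : ∀ p ∈ Finset.HasAntidiagonal.antidiagonal t,
        (t.choose p.1 : ℝ) * (bdiff^[p.1] (bdiff f) (l - (p.2:ℝ)) * bdiff^[p.2] g l)
        = (t.choose p.1 : ℝ) * (bdiff^[p.1 + 1] f (l - (p.2:ℝ)) * bdiff^[p.2] g l) := by
      intro p _
      rw [Function.iterate_succ_apply]
    rw [Finset.sum_congr rfl h1]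
    -- now RHS
    set X : ℕ → ℕ → ℝ := fun a b => bdiff^[a] f (l - (b:ℝ)) * bdiff^[b] g l with hX
    have hH : ∑ p ∈ Finset.HasAntidiagonal.antidiagonal (t+1), (t.choose p.1 : ℝ) * X p.1 p.2
        = (t.choose 0 : ℝ) * X 0 (t+1)
          + ∑ p ∈ Finset.HasAntidiagonal.antidiagonal t, (t.choose (p.1+1) : ℝ) * X (p.1+1) p.2 :=
      Finset.Nat.sum_antidiagonal_succ
    have hH' : ∑ p ∈ Finset.HasAntidiagonal.antidiagonal (t+1), (t.choose p.1 : ℝ) * X p.1 p.2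
        = (t.choose (t+1) : ℝ) * X (t+1) 0
          + ∑ p ∈ Finset.HasAntidiagonal.antidiagonal t, (t.choose p.1 : ℝ) * X p.1 (p.2+1) :=
      Finset.Nat.sum_antidiagonal_succ'
    have hG : ∑ p ∈ Finset.HasAntidiagonal.antidiagonal (t+1), ((t+1).choose p.1 : ℝ) * X p.1 p.2
        = ((t+1).choose 0 : ℝ) * X 0 (t+1)
          + ∑ p ∈ Finset.HasAntidiagonal.antidiagonal t, ((t+1).choose (p.1+1) : ℝ) * X (p.1+1) p.2 :=
      Finset.Nat.sum_antidiagonal_succ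
    have key : ∀ p : ℕ × ℕ, ((t+1).choose (p.1+1) : ℝ) = (t.choose p.1 : ℝ) + (t.choose (p.1+1) : ℝ) := by
      intro p; rw [Nat.choose_succ_succ]; push_cast; ring
    have hpush : ∀ p : ℕ × ℕ, (l - ((p.2:ℝ)+1)) = l - (((p.2+1 : ℕ)):ℝ) := by
      intro p; push_cast; ring
    calc (∑ p ∈ Finset.HasAntidiagonal.antidiagonal t, (t.choose p.1 : ℝ) * X (p.1+1) p.2)
          + ∑ p ∈ Finset.HasAntidiagonal.antidiagonal t, (t.choose p.1 : ℝ) * (bdiff^[p.1] f (l - ((p.2:ℝ)+1)) * bdiff^[p.2+1] g l)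
        = (∑ p ∈ Finset.HasAntidiagonal.antidiagonal t, (t.choose p.1 : ℝ) * X (p.1+1) p.2)
          + ∑ p ∈ Finset.HasAntidiagonal.antidiagonal t, (t.choose p.1 : ℝ) * X p.1 (p.2+1) := by
          congr 1
          refine Finset.sum_congr rfl fun p _ => ?_
          rw [hX]; rw [hpush p]
      _ = ∑ p ∈ Finset.HasAntidiagonal.antidiagonal (t+1), ((t+1).choose p.1 : ℝ) * X p.1 p.2 := by
          rw [hG]
          have : ∑ p ∈ Finset.HasAntidiagonal.antidiagonal t, ((t+1).choose (p.1+1) : ℝ) * X (p.1+1) p.2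
              = (∑ p ∈ Finset.HasAntidiagonal.antidiagonal t, (t.choose p.1 : ℝ) * X (p.1+1) p.2)
                + ∑ p ∈ Finset.HasAntidiagonal.antidiagonal t, (t.choose (p.1+1) : ℝ) * X (p.1+1) p.2 := by
            rw [← Finset.sum_add_distrib]
            refine Finset.sum_congr rfl fun p _ => ?_
            rw [key p]; ring
          rw [this]
          have hz : (t.choose (t+1) : ℝ) = 0 := by simp [Nat.choose_eq_zero_of_lt]
          have := hH'.symm.trans hH
          rw [hz, zero_mul, zero_add] at this
          rw [this]
          simp only [Nat.choose_zero_right, Nat.cast_one]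
          ring

lemma sum_adT_succ {M : Type*} [AddCommMonoid M] (m t : ℕ) (F : (Fin (m+1) → ℕ) → M) :
    ∑ i ∈ Finset.Nat.antidiagonalTuple (m+1) t, F i
      = ∑ p ∈ Finset.HasAntidiagonal.antidiagonal t, ∑ i ∈ Finset.Nat.antidiagonalTuple m p.2,
          F (Fin.cons p.1 i) := by
  rw [Finset.sum_sigma']
  refine Finset.sum_nbij' (fun x => (⟨(x 0, ∑ j : Fin m, x j.succ), Fin.tail x⟩ :
      Σ _ : ℕ × ℕ, (Fin m → ℕ))) (fun y => Fin.cons y.1.1 y.2) ?_ ?_ ?_ ?_ ?_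
  · intro a ha
    rw [Finset.Nat.mem_antidiagonalTuple] at ha
    simp only [Finset.mem_sigma, Finset.Nat.mem_antidiagonalTuple, Finset.HasAntidiagonal.mem_antidiagonal]
    constructor
    · rw [← ha, Fin.sum_univ_succ]
    · rfl
  · intro y hy
    simp only [Finset.mem_sigma, Finset.Nat.mem_antidiagonalTuple,
      Finset.HasAntidiagonal.mem_antidiagonal] at hy
    rw [Finset.Nat.mem_antidiagonalTuple, Fin.sum_univ_succ]
    simp only [Fin.cons_zero, Fin.cons_succ]
    rw [hy.2, hy.1]
  · intro a _
    exact Fin.cons_self_tail a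
  · intro y hy
    simp only [Finset.mem_sigma, Finset.Nat.mem_antidiagonalTuple,
      Finset.HasAntidiagonal.mem_antidiagonal] at hy
    ext1
    · simp only [Fin.cons_zero, Fin.cons_succ]
      rw [hy.2]
    · simp [Fin.tail_cons]
  · intro a _
    rw [Fin.cons_self_tail]

lemma filter_sum_cons_zero (m a : ℕ) (i : Fin m → ℕ) :
    ∑ j' ∈ Finset.univ.filter (fun j' => (0 : Fin (m+1)) < j'),
        ((Fin.cons a i : Fin (m+1) → ℕ) j' : ℝ)
      = ∑ j' : Fin m, (i j' : ℝ) := by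
  rw [Finset.sum_filter, Fin.sum_univ_succ]
  simp [Fin.succ_pos]

lemma filter_sum_cons_succ (m a : ℕ) (i : Fin m → ℕ) (j : Fin m) :
    ∑ j' ∈ Finset.univ.filter (fun j' => Fin.succ j < j'),
        ((Fin.cons a i : Fin (m+1) → ℕ) j' : ℝ)
      = ∑ j' ∈ Finset.univ.filter (fun j' => j < j'), (i j' : ℝ) := by
  rw [Finset.sum_filter, Finset.sum_filter, Fin.sum_univ_succ]
  simp [Fin.succ_lt_succ_iff, Fin.not_lt_zero]

lemma key_lemma (h : ℝ) (k : ℕ) (m : ℕ) : ∀ (t : ℕ) (l : ℝ),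
    bdiff^[t] (fun x => (Ppoly h k x) ^ m) l
      = (t.factorial : ℝ) * ∑ i ∈ Finset.Nat.antidiagonalTuple m t, h ^ t *
          ∏ j : Fin m, ((k.descFactorial (i j) : ℝ) / ((i j).factorial : ℝ)) *
            Ppoly h (k - i j)
              (l - ∑ j' ∈ Finset.univ.filter (fun j' => j < j'), (i j' : ℝ)) := by
  induction m with
  | zero =>
    intro t l
    cases t with
    | zero => simp [Finset.Nat.antidiagonalTuple_zero_zero]
    | succ s =>
      rw [Function.iterate_succ_apply]
      have h1 : bdiff (fun x => Ppoly h k x ^ 0) = fun _ => (0:ℝ) := by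
        funext x; simp [bdiff]
      rw [h1, bdiff_iter_zero]
      simp [Finset.Nat.antidiagonalTuple_zero_succ]
  | succ m ih =>
    intro t l
    have hL : bdiff^[t] (fun x => Ppoly h k x ^ (m+1)) l
        = ∑ p ∈ Finset.HasAntidiagonal.antidiagonal t,
            (t.choose p.1 : ℝ) * (bdiff^[p.1] (Ppoly h k) (l - (p.2:ℝ))
              * bdiff^[p.2] (fun y => Ppoly h k y ^ m) l) := by
      have e : (fun x => Ppoly h k x ^ (m+1))
          = (fun x => (Ppoly h k) x * (fun y => Ppoly h k y ^ m) x) := by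
        funext x; ring
      rw [e]
      exact bdiff_iter_mul t _ _ l
    rw [hL, sum_adT_succ, Finset.mul_sum]
    refine Finset.sum_congr rfl fun p hp => ?_
    rw [Finset.HasAntidiagonal.mem_antidiagonal] at hp
    rw [bdiff_iter_Ppoly, ih, Finset.mul_sum, Finset.mul_sum, Finset.mul_sum, Finset.mul_sum]
    refine Finset.sum_congr rfl fun i hi => ?_
    rw [Finset.Nat.mem_antidiagonalTuple] at hi
    have hsum : (∑ j' : Fin m, (i j' : ℝ)) = (p.2 : ℝ) := by
      rw [← hi]; push_cast; rfl
    rw [Fin.prod_univ_succ]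
    simp only [Fin.cons_zero, Fin.cons_succ]
    rw [filter_sum_cons_zero, hsum]
    have hprod : ∀ j : Fin m,
        ((k.descFactorial (i j) : ℝ) / ((i j).factorial : ℝ)) *
            Ppoly h (k - i j)
              (l - ∑ j' ∈ Finset.univ.filter (fun j' => Fin.succ j < j'),
                ((Fin.cons p.1 i : Fin (m+1) → ℕ) j' : ℝ))
        = ((k.descFactorial (i j) : ℝ) / ((i j).factorial : ℝ)) *
            Ppoly h (k - i j)
              (l - ∑ j' ∈ Finset.univ.filter (fun j' => j < j'), (i j' : ℝ)) := by
      intro j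
      rw [filter_sum_cons_succ]
    rw [Finset.prod_congr rfl (fun j _ => hprod j)]
    subst hp
    have hfac : (((p.1 + p.2).factorial : ℕ) : ℝ)
        = (((p.1 + p.2).choose p.1 : ℕ) : ℝ) * (p.1.factorial : ℝ) * (p.2.factorial : ℝ) := by
      have h0 := Nat.choose_mul_factorial_mul_factorial (Nat.le_add_right p.1 p.2)
      rw [Nat.add_sub_cancel_left] at h0
      exact_mod_cast h0.symm
    rw [hfac, pow_add]
    have hf1 : (p.1.factorial : ℝ) ≠ 0 := Nat.cast_ne_zero.mpr p.1.factorial_ne_zero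
    field_simp

/-- for all `t ≥ 0`,
`(Δ^t P_k^m)(l)/t! = Σ_{i₁+…+i_m=t} ℏ^t ∏_{j=1}^m ((k)_{i_j}/i_j!)·P_{k−i_j}(l − i_{j+1} − … − i_m)`,
summing over ordered `m`-tuples of nonnegative integers with sum `t`
(terms with `i_j > k` vanish since `(k)_{i_j} = 0`). -/
theorem bdiff_Ppoly_pow (h : ℝ) (m k t : ℕ) (hm : 1 ≤ m) (l : ℝ) :
    bdiff^[t] (fun x => (Ppoly h k x) ^ m) l / (t.factorial : ℝ)
    = ∑ i ∈ Finset.Nat.antidiagonalTuple m t, h ^ t *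
        ∏ j : Fin m,
          ((k.descFactorial (i j) : ℝ) / ((i j).factorial : ℝ)) *
            Ppoly h (k - i j)
              (l - ∑ j' ∈ Finset.univ.filter (fun j' => j < j'), (i j' : ℝ)) := by
  rw [key_lemma h k m t l, mul_div_cancel_left₀]
  exact Nat.cast_ne_zero.mpr t.factorial_ne_zero
end

section
/- Let R(ℏ;k,l,i_1,...,i_m) = Π_{j=1}^m Π_{γ_j=0}^{k−i_j−1} (1+ℏ(l−i_{j+1}−...−i_m+γ_j+1/2)) and let Δ_{i_j} be the backward difference in i_j. Then Δ_{i_j} R(ℏ;k,−1/2,i_1,...,i_m) = (1 − (1+ℏ(k−i_j−...−i_m)) · Π_{q=1}^{j−1} (1+ℏ(k−i_q−...−i_m))/(1+ℏ(−i_{q+1}−...−i_m))) · R(ℏ;k,−1/2,i_1,...,i_m). -/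
/-- `R(ℏ;k,−1/2,i₁,…,i_m) = ∏_{j=1}^m ∏_{γ_j=0}^{k−i_j−1} (1 + ℏ(γ_j − i_{j+1} − … − i_m))`
(the specialization `l = −1/2` of the `R`-polynomial), for integer arguments
`i_j` (so that backward differences in the `i_j` make sense). -/
noncomputable def RZ (h : ℝ) (m : ℕ) (k : ℕ) (i : Fin m → ℤ) : ℝ :=
  ∏ j : Fin m, ∏ γ ∈ Finset.range (((k : ℤ) - i j).toNat),
    (1 + h * ((γ : ℝ) - ∑ j' ∈ Finset.univ.filter (fun j' => j < j'), (i j' : ℝ)))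

/-- Shift lemma: multiplying the shifted product by the bottom factor equals the
original product times the top factor. -/
lemma shiftA (h c : ℝ) (n : ℕ) :
    (∏ γ ∈ Finset.range n, (1 + h * ((γ : ℝ) + c + 1))) * (1 + h * c)
      = (∏ γ ∈ Finset.range n, (1 + h * ((γ : ℝ) + c))) * (1 + h * ((n : ℝ) + c)) := by
  have h1 := Finset.prod_range_succ (fun γ : ℕ => 1 + h * ((γ : ℝ) + c)) n
  have h2 := Finset.prod_range_succ' (fun γ : ℕ => 1 + h * ((γ : ℝ) + c)) n
  have h3 : (∏ γ ∈ Finset.range n, (1 + h * ((γ : ℝ) + c + 1)))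
      = ∏ γ ∈ Finset.range n, (1 + h * (((γ + 1 : ℕ) : ℝ) + c)) := by
    apply Finset.prod_congr rfl
    intro x _; push_cast; ring
  rw [h3]
  rw [h1] at h2
  simpa using h2.symm

/-- for `0 ≤ i_j ≤ k`, with `Δ_{i_j}` the backward difference in `i_j`,
`Δ_{i_j} R(ℏ;k,−1/2,i) = (1 − (1+ℏ(k−i_j−…−i_m))·∏_{q=1}^{j−1} (1+ℏ(k−i_q−…−i_m))/(1+ℏ(−i_{q+1}−…−i_m))) · R(ℏ;k,−1/2,i)`,
as an identity of rational functions in `ℏ` (i.e. for every real `ℏ` for which the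
denominators are nonzero). -/
theorem bdiff_RZ (h : ℝ) (m : ℕ) (k : ℕ) (j : Fin m) (i : Fin m → ℤ)
    (hi : ∀ j', 0 ≤ i j' ∧ i j' ≤ (k : ℤ))
    (hden : ∀ q : Fin m, q < j →
      1 + h * (-∑ q' ∈ Finset.univ.filter (fun q' => q < q'), (i q' : ℝ)) ≠ 0) :
    RZ h m k i - RZ h m k (Function.update i j (i j - 1))
    = (1 - (1 + h * ((k : ℝ) - ∑ j' ∈ Finset.univ.filter (fun j' => j ≤ j'), (i j' : ℝ))) *
          ∏ q ∈ Finset.univ.filter (fun q => q < j),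
            ((1 + h * ((k : ℝ) - ∑ q' ∈ Finset.univ.filter (fun q' => q ≤ q'), (i q' : ℝ))) /
              (1 + h * (-∑ q' ∈ Finset.univ.filter (fun q' => q < q'), (i q' : ℝ))))) *
        RZ h m k i := by
  classical
  set i' := Function.update i j (i j - 1) with hi'
  -- the sum with ≤ splits off the diagonal term
  have hsplit : ∀ q : Fin m,
      (∑ q' ∈ Finset.univ.filter (fun q' => q ≤ q'), (i q' : ℝ))
        = (i q : ℝ) + ∑ q' ∈ Finset.univ.filter (fun q' => q < q'), (i q' : ℝ) := by
    intro q
    have hins : Finset.univ.filter (fun q' => q ≤ q')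
        = insert q (Finset.univ.filter (fun q' : Fin m => q < q')) := by
      ext x
      simp [Finset.mem_filter, le_iff_lt_or_eq, eq_comm, or_comm]
    rw [hins, Finset.sum_insert (by simp)]
  -- i' as a difference
  have hupd : i' = fun q' => i q' - if q' = j then 1 else 0 := by
    funext q'
    by_cases hq : q' = j
    · subst hq; simp [hi', Function.update]
    · simp [hi', Function.update, hq]
  -- the updated sums
  have hSum : ∀ q : Fin m,
      (∑ q' ∈ Finset.univ.filter (fun q' => q < q'), (i' q' : ℝ))
        = (∑ q' ∈ Finset.univ.filter (fun q' => q < q'), (i q' : ℝ))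
            - (if q < j then 1 else 0) := by
    intro q
    rw [hupd]
    push_cast
    rw [Finset.sum_sub_distrib]
    congr 1
    rw [Finset.sum_ite_eq' (Finset.univ.filter (fun q' : Fin m => q < q')) j (fun _ => (1:ℝ))]
    simp
  -- real value of the range length
  have hNr : ∀ q : Fin m, ((((k : ℤ) - i q).toNat : ℝ)) = (k : ℝ) - (i q : ℝ) := by
    intro q
    have h1 : (0:ℤ) ≤ (k : ℤ) - i q := by have := (hi q).2; omega
    have h2 : ((((k : ℤ) - i q).toNat : ℤ) : ℝ) = (k : ℝ) - (i q : ℝ) := by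
      rw [Int.toNat_of_nonneg h1]; push_cast; ring
    exact_mod_cast h2
  -- the master product identity
  have master :
      RZ h m k i' * ∏ q ∈ Finset.univ.filter (fun q => q < j),
          (1 + h * (-∑ q' ∈ Finset.univ.filter (fun q' => q < q'), (i q' : ℝ)))
        = RZ h m k i * ((1 + h * ((k : ℝ) -
              ∑ j' ∈ Finset.univ.filter (fun j' => j ≤ j'), (i j' : ℝ))) *
            ∏ q ∈ Finset.univ.filter (fun q => q < j),
              (1 + h * ((k : ℝ) -
                ∑ q' ∈ Finset.univ.filter (fun q' => q ≤ q'), (i q' : ℝ)))) := by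
    rw [RZ, RZ]
    rw [Finset.prod_filter (fun q : Fin m => q < j)
        (fun q => 1 + h * (-∑ q' ∈ Finset.univ.filter (fun q' => q < q'), (i q' : ℝ))),
      Finset.prod_filter (fun q : Fin m => q < j)
        (fun q => 1 + h * ((k : ℝ) -
          ∑ q' ∈ Finset.univ.filter (fun q' => q ≤ q'), (i q' : ℝ)))]
    rw [← Finset.prod_mul_distrib]
    have hE : (1 + h * ((k : ℝ) - ∑ j' ∈ Finset.univ.filter (fun j' => j ≤ j'), (i j' : ℝ)))
        = ∏ q : Fin m, (if q = j then
            (1 + h * ((k : ℝ) - ∑ j' ∈ Finset.univ.filter (fun j' => j ≤ j'), (i j' : ℝ)))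
          else 1) := by
      rw [Finset.prod_ite_eq' Finset.univ j]
      simp
    rw [hE, ← Finset.prod_mul_distrib, ← Finset.prod_mul_distrib]
    apply Finset.prod_congr rfl
    intro q _
    rcases lt_trichotomy q j with hq | hq | hq
    · -- q < j : shift
      have hne : q ≠ j := ne_of_lt hq
      simp only [if_pos hq, if_neg hne, one_mul]
      have hiq : i' q = i q := by rw [hupd]; simp [hne]
      rw [hiq]
      have e0 : (∏ γ ∈ Finset.range (((k : ℤ) - i q).toNat),
          (1 + h * ((γ : ℝ) - ∑ q' ∈ Finset.univ.filter (fun q' => q < q'), (i' q' : ℝ))))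
          = ∏ γ ∈ Finset.range (((k : ℤ) - i q).toNat),
            (1 + h * ((γ : ℝ) +
              (-∑ q' ∈ Finset.univ.filter (fun q' => q < q'), (i q' : ℝ)) + 1)) := by
        apply Finset.prod_congr rfl
        intro γ _
        rw [hSum q, if_pos hq]; ring
      rw [e0, shiftA h (-∑ q' ∈ Finset.univ.filter (fun q' => q < q'), (i q' : ℝ))
        (((k : ℤ) - i q).toNat), hNr q, hsplit q]
      have e1 : (∏ γ ∈ Finset.range (((k : ℤ) - i q).toNat),
          (1 + h * ((γ : ℝ) +
            (-∑ q' ∈ Finset.univ.filter (fun q' => q < q'), (i q' : ℝ)))))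
          = ∏ γ ∈ Finset.range (((k : ℤ) - i q).toNat),
            (1 + h * ((γ : ℝ) - ∑ q' ∈ Finset.univ.filter (fun q' => q < q'), (i q' : ℝ))) := by
        apply Finset.prod_congr rfl
        intro γ _; ring
      rw [e1]; ring
    · -- q = j : extra top factor
      subst hq
      have hnotlt : ¬ q < q := lt_irrefl q
      simp only [if_neg hnotlt, if_pos rfl, mul_one]
      have hNq : ((k : ℤ) - i' q).toNat = ((k : ℤ) - i q).toNat + 1 := by
        have h1 : i' q = i q - 1 := by rw [hupd]; simp
        have h2 := (hi q).2
        omega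
      rw [hNq, Finset.prod_range_succ, hSum q, if_neg hnotlt, hNr q, hsplit q]
      have e1 : (∏ γ ∈ Finset.range (((k : ℤ) - i q).toNat),
          (1 + h * ((γ : ℝ) -
            ((∑ q' ∈ Finset.univ.filter (fun q' => q < q'), (i q' : ℝ)) - 0))))
          = ∏ γ ∈ Finset.range (((k : ℤ) - i q).toNat),
            (1 + h * ((γ : ℝ) - ∑ q' ∈ Finset.univ.filter (fun q' => q < q'), (i q' : ℝ))) := by
        apply Finset.prod_congr rfl
        intro γ _; ring
      rw [e1]
      simp only [if_true]
      ring
    · -- j < q : untouched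
      have hnotlt : ¬ q < j := not_lt_of_gt hq
      have hne : q ≠ j := ne_of_gt hq
      simp only [if_neg hnotlt, if_neg hne, mul_one]
      have hiq : i' q = i q := by rw [hupd]; simp [hne]
      rw [hiq]
      apply Finset.prod_congr rfl
      intro γ _
      rw [hSum q, if_neg hnotlt]
      ring
  -- finish by field algebra
  have hDne : (∏ q ∈ Finset.univ.filter (fun q : Fin m => q < j),
      (1 + h * (-∑ q' ∈ Finset.univ.filter (fun q' => q < q'), (i q' : ℝ)))) ≠ 0 := by
    apply Finset.prod_ne_zero_iff.mpr
    intro q hq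
    exact hden q (by simpa using hq)
  have hB : RZ h m k i'
      = RZ h m k i * ((1 + h * ((k : ℝ) -
            ∑ j' ∈ Finset.univ.filter (fun j' => j ≤ j'), (i j' : ℝ))) *
          ∏ q ∈ Finset.univ.filter (fun q => q < j),
            (1 + h * ((k : ℝ) -
              ∑ q' ∈ Finset.univ.filter (fun q' => q ≤ q'), (i q' : ℝ)))) /
        (∏ q ∈ Finset.univ.filter (fun q : Fin m => q < j),
          (1 + h * (-∑ q' ∈ Finset.univ.filter (fun q' => q < q'), (i q' : ℝ)))) := by
    rw [eq_div_iff hDne]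
    exact master
  rw [Finset.prod_div_distrib, hB]
  field_simp
end

section
/- Let R(ℏ;k,−1/2,i_1,...,i_m) = Π_{j=1}^m Π_{γ_j=0}^{k−i_j−1}(1+ℏ(γ_j−i_{j+1}−...−i_m)) and let 𝔈 = Σ_{j=1}^m i_j Δ_{i_j} be the discrete Euler operator (Δ_{i_j} the backward difference in i_j). Then (𝔈 R)(ℏ;k,−1/2,i_1,...,i_m) evaluated at i_1 = ... = i_m = k equals C(m,2)·k²·ℏ, where C(m,2)=m(m−1)/2. -/
lemma RZ_const (h : ℝ) (m k : ℕ) : RZ h m k (fun _ => (k : ℤ)) = 1 := by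
  unfold RZ
  apply Finset.prod_eq_one
  intro j _
  simp

lemma card_gt (m : ℕ) (j : Fin m) :
    (Finset.univ.filter (fun j' => j < j')).card = m - 1 - (j : ℕ) := by
  rw [Finset.filter_lt_eq_Ioi, Fin.card_Ioi]

lemma RZ_update (h : ℝ) (m k : ℕ) (j : Fin m) :
    RZ h m k (Function.update (fun _ => (k : ℤ)) j ((k : ℤ) - 1))
      = 1 - h * ((m - 1 - (j : ℕ) : ℕ) : ℝ) * k := by
  unfold RZ
  rw [Finset.prod_eq_single j]
  · have h1 : ((k : ℤ) - Function.update (fun _ => (k : ℤ)) j ((k : ℤ) - 1) j).toNat = 1 := by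
      simp
    rw [h1]
    have h2 : ∑ j' ∈ Finset.univ.filter (fun j' => j < j'),
        ((Function.update (fun _ => (k : ℤ)) j ((k : ℤ) - 1) j' : ℤ) : ℝ)
        = ((m - 1 - (j : ℕ) : ℕ) : ℝ) * k := by
      rw [Finset.sum_congr rfl (fun x hx => ?_), Finset.sum_const, card_gt, nsmul_eq_mul]
      have hne : x ≠ j := ne_of_gt (Finset.mem_filter.mp hx).2
      rw [Function.update_of_ne hne]; norm_num
    simp [h2]
    ring
  · intro b _ hb
    have : ((k : ℤ) - Function.update (fun _ => (k : ℤ)) j ((k : ℤ) - 1) b).toNat = 0 := by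
      rw [Function.update_of_ne hb]; simp
    rw [this]; simp
  · simp

/-- with `𝔈 = Σ_j i_j Δ_{i_j}` the discrete Euler operator
(`Δ_{i_j}` the backward difference in `i_j`), the value of `𝔈 R(ℏ;k,−1/2,i)` at
`i₁ = … = i_m = k` equals `C(m,2)·k²·ℏ`. -/
theorem euler_RZ (h : ℝ) (m : ℕ) (k : ℕ) (hk : 0 < k) :
    ∑ j : Fin m, (k : ℝ) *
        (RZ h m k (fun _ => (k : ℤ)) -
          RZ h m k (Function.update (fun _ => (k : ℤ)) j ((k : ℤ) - 1)))
    = (m.choose 2 : ℝ) * (k : ℝ) ^ 2 * h := by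
  have key : ∀ j : Fin m, (k : ℝ) *
      (RZ h m k (fun _ => (k : ℤ)) -
        RZ h m k (Function.update (fun _ => (k : ℤ)) j ((k : ℤ) - 1)))
      = ((m - 1 - (j : ℕ) : ℕ) : ℝ) * (k : ℝ) ^ 2 * h := by
    intro j
    rw [RZ_const, RZ_update]
    ring
  rw [Finset.sum_congr rfl (fun j _ => key j)]
  have hnat : ∑ j : Fin m, (m - 1 - (j : ℕ)) = m.choose 2 := by
    rw [Fin.sum_univ_eq_sum_range (fun j => m - 1 - j)]
    calc ∑ i ∈ Finset.range m, (m - 1 - i) = ∑ i ∈ Finset.range m, i :=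
          Finset.sum_range_reflect (fun j => j) m
      _ = m.choose 2 := by rw [Finset.sum_range_id, Nat.choose_two_right]
  calc ∑ j : Fin m, ((m - 1 - (j : ℕ) : ℕ) : ℝ) * (k : ℝ) ^ 2 * h
      = ((∑ j : Fin m, (m - 1 - (j : ℕ)) : ℕ) : ℝ) * (k : ℝ) ^ 2 * h := by
        rw [← Finset.sum_mul, ← Finset.sum_mul, Nat.cast_sum]
    _ = (m.choose 2 : ℝ) * (k : ℝ) ^ 2 * h := by rw [hnat]
end
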